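/- Let φ be a positive, twice-differentiable solution of φ''(x) = x^{-1/2} φ(x)^{3/2} on (0,∞) with φ' < 0, and define t(x) = 144^{-1/6} x^{1/2} φ(x)^{1/6} and u = -(16/3)^{1/3} φ^{-4/3} φ'. Then along the solution, u as a function of t satisfies du/dt = 8 (t u² - 1)/(1 - t² u) wherever 1 - t² u ≠ 0 and dt/dx ≠ 0. -/

import Mathlib

/-!
The constants in `t` and `u` are chosen so that `t² u = -x φ' / (3 φ)`. Feeding this into the
logarithmic derivatives of `t` and `u` and using the equation for `φ''` gives
`t' = t (1 - t² u) / (2 x)` and `u' = 4 t (t u² - 1) / x`, whose quotient is the claimed right-hand side.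
-/

open Real

noncomputable section

def majoranaT (φ : ℝ → ℝ) (x : ℝ) : ℝ :=
  (144 : ℝ) ^ (-(1 : ℝ) / 6) * x ^ ((1 : ℝ) / 2) * φ x ^ ((1 : ℝ) / 6)

def majoranaU (φ : ℝ → ℝ) (x : ℝ) : ℝ :=
  -((16 / 3 : ℝ) ^ ((1 : ℝ) / 3)) * φ x ^ (-(4 : ℝ) / 3) * deriv φ x

end

lemma rpow_144_neg_one_sixth_pow_three : ((144 : ℝ) ^ (-(1 : ℝ) / 6)) ^ 3 = 1 / 12 := by
  rw [← rpow_natCast, ← rpow_mul (by norm_num), show (144 : ℝ) = 12 ^ (2 : ℝ) by norm_num,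
    ← rpow_mul (by norm_num)]
  norm_num

lemma rpow_16_div_3_one_third : (16 / 3 : ℝ) ^ ((1 : ℝ) / 3) = 4 * (144 : ℝ) ^ (-(1 : ℝ) / 6) := by
  refine (pow_left_inj₀ (by positivity) (by positivity) (by norm_num : 3 ≠ 0)).1 ?_
  rw [mul_pow, rpow_144_neg_one_sixth_pow_three, ← rpow_natCast, ← rpow_mul (by norm_num)]
  norm_num

section

variable {φ : ℝ → ℝ} {x : ℝ}

lemma majoranaT_sq_mul_majoranaU (hx : 0 ≤ x) (hφ : 0 < φ x) :
    majoranaT φ x ^ 2 * majoranaU φ x = -(x * deriv φ x / (3 * φ x)) := by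
  have hsqrt : (x ^ ((1 : ℝ) / 2)) ^ 2 = x := by
    rw [← sqrt_eq_rpow, sq_sqrt hx]
  have hφpow : (φ x ^ ((1 : ℝ) / 6)) ^ 2 * φ x ^ (-(4 : ℝ) / 3) = (φ x)⁻¹ := by
    rw [← rpow_natCast, ← rpow_mul hφ.le, ← rpow_add hφ, ← rpow_neg_one]
    norm_num
  calc majoranaT φ x ^ 2 * majoranaU φ x
      = -(4 * ((144 : ℝ) ^ (-(1 : ℝ) / 6)) ^ 3 * (x ^ ((1 : ℝ) / 2)) ^ 2
          * ((φ x ^ ((1 : ℝ) / 6)) ^ 2 * φ x ^ (-(4 : ℝ) / 3)) * deriv φ x) := by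
        rw [majoranaT, majoranaU, rpow_16_div_3_one_third]; ring
    _ = -(x * deriv φ x / (3 * φ x)) := by
        rw [rpow_144_neg_one_sixth_pow_three, hsqrt, hφpow]; field_simp; ring

lemma hasDerivAt_majoranaT (hx : 0 < x) (hφ : 0 < φ x) (hdφ : DifferentiableAt ℝ φ x) :
    HasDerivAt (majoranaT φ)
      (majoranaT φ x / (2 * x) * (1 - majoranaT φ x ^ 2 * majoranaU φ x)) x := by
  refine (((hasDerivAt_rpow_const (p := (1 : ℝ) / 2) (Or.inl hx.ne')).const_mul
    ((144 : ℝ) ^ (-(1 : ℝ) / 6))).mul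
      (hdφ.hasDerivAt.rpow_const (p := (1 : ℝ) / 6) (Or.inl hφ.ne'))).congr_deriv ?_
  rw [majoranaT_sq_mul_majoranaU hx.le hφ, majoranaT, rpow_sub_one hx.ne', rpow_sub_one hφ.ne']
  field_simp
  ring

lemma hasDerivAt_majoranaU (hx : 0 < x) (hφ : 0 < φ x) (hdφ : DifferentiableAt ℝ φ x)
    (hφ'' : HasDerivAt (deriv φ) (x ^ (-(1 : ℝ) / 2) * φ x ^ ((3 : ℝ) / 2)) x) :
    HasDerivAt (majoranaU φ)
      (4 * majoranaT φ x / x * (majoranaT φ x * majoranaU φ x ^ 2 - 1)) x := by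
  refine (((hdφ.hasDerivAt.rpow_const (p := -(4 : ℝ) / 3) (Or.inl hφ.ne')).const_mul
    (-((16 / 3 : ℝ) ^ ((1 : ℝ) / 3)))).mul hφ'').congr_deriv ?_
  have hφpow : φ x ^ (-(4 : ℝ) / 3) * φ x ^ ((3 : ℝ) / 2) = φ x ^ ((1 : ℝ) / 6) := by
    rw [← rpow_add hφ]; norm_num
  have hxpow : x ^ (-(1 : ℝ) / 2) = x ^ ((1 : ℝ) / 2) / x := by
    rw [← rpow_sub_one hx.ne']; norm_num
  have hlog : deriv φ x / φ x = -3 * (majoranaT φ x ^ 2 * majoranaU φ x) / x := by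
    rw [majoranaT_sq_mul_majoranaU hx.le hφ]; field_simp
  calc _ = majoranaU φ x * (-4 / 3) * (deriv φ x / φ x)
        - 4 * majoranaT φ x / x := by
        rw [majoranaU, majoranaT, rpow_sub_one hφ.ne', hxpow, ← hφpow, rpow_16_div_3_one_third]
        ring
    _ = _ := by rw [hlog]; field_simp

end

theorem majorana_transformation_general (φ : ℝ → ℝ)
    (hpos : ∀ x : ℝ, 0 < x → 0 < φ x)
    (hdiff : ∀ x : ℝ, 0 < x → DifferentiableAt ℝ φ x)
    (hdiff' : ∀ x : ℝ, 0 < x → DifferentiableAt ℝ (deriv φ) x)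
    (hode : ∀ x : ℝ, 0 < x →
      deriv (deriv φ) x = x ^ (-(1 : ℝ) / 2) * (φ x) ^ ((3 : ℝ) / 2))
    (t u : ℝ → ℝ)
    (ht : ∀ x : ℝ, t x = (144 : ℝ) ^ (-(1 : ℝ) / 6) * x ^ ((1 : ℝ) / 2) * (φ x) ^ ((1 : ℝ) / 6))
    (hu : ∀ x : ℝ, u x = -((16 / 3 : ℝ) ^ ((1 : ℝ) / 3)) * (φ x) ^ (-(4 : ℝ) / 3) * deriv φ x) :
    ∀ x : ℝ, 0 < x → 1 - (t x) ^ 2 * u x ≠ 0 → deriv t x ≠ 0 →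
      deriv u x / deriv t x = 8 * (t x * (u x) ^ 2 - 1) / (1 - (t x) ^ 2 * u x) := by
  obtain rfl : t = majoranaT φ := funext ht
  obtain rfl : u = majoranaU φ := funext hu
  intro x hx hden _
  have hφ := hpos x hx
  have ht_ne : majoranaT φ x ≠ 0 := by unfold majoranaT; positivity
  rw [(hasDerivAt_majoranaT hx hφ (hdiff x hx)).deriv,
    (hasDerivAt_majoranaU hx hφ (hdiff x hx) (hode x hx ▸ (hdiff' x hx).hasDerivAt)).deriv]
  field_simp
  ring

theorem majorana_transformation (φ : ℝ → ℝ)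
    (hpos : ∀ x : ℝ, 0 < x → 0 < φ x)
    (hneg : ∀ x : ℝ, 0 < x → deriv φ x < 0)
    (hdiff : ∀ x : ℝ, 0 < x → DifferentiableAt ℝ φ x)
    (hdiff' : ∀ x : ℝ, 0 < x → DifferentiableAt ℝ (deriv φ) x)
    (hode : ∀ x : ℝ, 0 < x →
      deriv (deriv φ) x = x ^ (-(1 : ℝ) / 2) * (φ x) ^ ((3 : ℝ) / 2))
    (t u : ℝ → ℝ)
    (ht : ∀ x : ℝ, t x = (144 : ℝ) ^ (-(1 : ℝ) / 6) * x ^ ((1 : ℝ) / 2) * (φ x) ^ ((1 : ℝ) / 6))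
    (hu : ∀ x : ℝ, u x = -((16 / 3 : ℝ) ^ ((1 : ℝ) / 3)) * (φ x) ^ (-(4 : ℝ) / 3) * deriv φ x) :
    ∀ x : ℝ, 0 < x → 1 - (t x) ^ 2 * u x ≠ 0 → deriv t x ≠ 0 →
      deriv u x / deriv t x = 8 * (t x * (u x) ^ 2 - 1) / (1 - (t x) ^ 2 * u x) :=
  majorana_transformation_general φ hpos hdiff hdiff' hode t u ht hu
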